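/- arXiv:2601.08765 — 4 statements merged into one kernel-verified Lean document; each statement's English description precedes it below -/
import Mathlib

section
/- Fix integers r ≥ 1, t ≥ 1, n ≥ 1, an index i ∈ {1, …, n}, and t pairwise disjoint subsets R^1, …, R^t of {1, …, n} \ {i}, each of size exactly r. Let p ∈ [0, 1/2) and let e ∈ 𝔽₂^n have independent coordinates, each equal to 1 with probability p. Call the j-th vote wrong if Σ_{u ∈ R^j} e_u = 1 over 𝔽₂. Then the probability that the number of wrong votes is at least the number of correct votes (i.e., at least t/2 votes are wrong) is at most (1 − (1−2p)^{2r})^{t/2}. -/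
open Finset

set_option maxHeartbeats 1000000


/-- weight of a bit -/
noncomputable def bw (p : ℝ) (b : ZMod 2) : ℝ := if b = 1 then p else 1 - p
/-- character -/
noncomputable def bch (b : ZMod 2) : ℝ := if b = 1 then -1 else 1

lemma zmod2_cases (b : ZMod 2) : b = 0 ∨ b = 1 := by revert b; decide

lemma bch_add (a b : ZMod 2) : bch (a + b) = bch a * bch b := by
  rcases zmod2_cases a with h | h <;> rcases zmod2_cases b with h' | h' <;>
    subst h <;> subst h' <;>
    simp only [zero_add, add_zero, show (1 : ZMod 2) + 1 = 0 from by decide, bch] <;>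
    norm_num [show (0 : ZMod 2) ≠ 1 from by decide]

lemma bch_sum {α : Type*} (s : Finset α) (f : α → ZMod 2) :
    bch (∑ u ∈ s, f u) = ∏ u ∈ s, bch (f u) := by
  induction s using Finset.cons_induction with
  | empty => simp [bch, show (0 : ZMod 2) ≠ 1 by decide]
  | cons a s ha ih => rw [Finset.sum_cons, Finset.prod_cons, bch_add, ih]

lemma pi_factor (n : ℕ) (g : Fin n → ZMod 2 → ℝ) :
    ∑ e : Fin n → ZMod 2, ∏ u, g u (e u) = ∏ u, (g u 0 + g u 1) := by
  classical
  calc ∑ e : Fin n → ZMod 2, ∏ u, g u (e u)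
      = ∑ e ∈ Fintype.piFinset (fun _ : Fin n => (univ : Finset (ZMod 2))), ∏ u, g u (e u) := by
        rw [Fintype.piFinset_univ]
    _ = ∏ u, ∑ b : ZMod 2, g u b := (Finset.prod_univ_sum _ _).symm
    _ = ∏ u, (g u 0 + g u 1) := by
        refine Finset.prod_congr rfl fun u _ => ?_
        exact Fin.sum_univ_two (g u)

lemma char_sum (p : ℝ) (n : ℕ) (U : Finset (Fin n)) :
    ∑ e : Fin n → ZMod 2, (∏ u, bw p (e u)) * ∏ u ∈ U, bch (e u) = (1 - 2 * p) ^ U.card := by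
  classical
  have h1 : ∀ e : Fin n → ZMod 2, (∏ u, bw p (e u)) * ∏ u ∈ U, bch (e u)
      = ∏ u, (bw p (e u) * (if u ∈ U then bch (e u) else 1)) := by
    intro e
    rw [Finset.prod_mul_distrib]
    congr 1
    rw [Finset.prod_ite_mem, Finset.univ_inter]
  rw [Finset.sum_congr rfl fun e _ => h1 e]
  rw [pi_factor n (fun u b => bw p b * (if u ∈ U then bch b else 1))]
  have h2 : ∀ u : Fin n, bw p 0 * (if u ∈ U then bch 0 else 1) + bw p 1 * (if u ∈ U then bch 1 else 1)
      = (if u ∈ U then 1 - 2 * p else 1) := by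
    intro u
    by_cases h : u ∈ U <;>
      simp [h, bw, bch, show (0 : ZMod 2) ≠ 1 from by decide] <;> ring
  rw [Finset.prod_congr rfl fun u _ => h2 u, Finset.prod_ite_mem, Finset.univ_inter,
    Finset.prod_const]

lemma E_eq (n t r : ℕ) (p : ℝ) (R : Fin t → Finset (Fin n))
    (hdisj : ∀ j j', j ≠ j' → Disjoint (R j) (R j'))
    (hcard : ∀ j, (R j).card = r) (x : Fin t → ZMod 2) :
    ∑ e : Fin n → ZMod 2,
        (∏ u, bw p (e u)) * ∏ j, (if (∑ u ∈ R j, e u) = x j then (1:ℝ) else 0)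
    = ∏ j, ((1 + bch (x j) * (1 - 2 * p) ^ r) / 2) := by
  classical
  have hind : ∀ (e : Fin n → ZMod 2) (j : Fin t),
      (if (∑ u ∈ R j, e u) = x j then (1:ℝ) else 0)
      = (bch (x j) / 2) * ∏ u ∈ R j, bch (e u) + 1 / 2 := by
    intro e j
    rw [← bch_sum]
    rcases zmod2_cases (∑ u ∈ R j, e u) with h | h <;> rcases zmod2_cases (x j) with h' | h' <;>
      rw [h, h'] <;> norm_num [bch, show (0 : ZMod 2) ≠ 1 by decide]
  have hexp : ∀ e : Fin n → ZMod 2,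
      ∏ j, ((bch (x j) / 2) * ∏ u ∈ R j, bch (e u) + 1 / 2)
      = ∑ S ∈ (univ : Finset (Fin t)).powerset,
          ((∏ j ∈ S, bch (x j) / 2) * ∏ u ∈ S.biUnion R, bch (e u)) * (1 / 2 : ℝ) ^ (univ \ S).card := by
    intro e
    rw [Finset.prod_add]
    refine Finset.sum_congr rfl fun S hS => ?_
    rw [Finset.prod_mul_distrib, Finset.prod_const]
    congr 2
    exact (Finset.prod_biUnion (fun a _ b _ hab => hdisj a b hab)).symm
  calc ∑ e : Fin n → ZMod 2,
        (∏ u, bw p (e u)) * ∏ j, (if (∑ u ∈ R j, e u) = x j then (1:ℝ) else 0)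
      = ∑ e : Fin n → ZMod 2, ∑ S ∈ (univ : Finset (Fin t)).powerset,
          ((∏ j ∈ S, bch (x j) / 2) * (1 / 2 : ℝ) ^ (univ \ S).card) *
            ((∏ u, bw p (e u)) * ∏ u ∈ S.biUnion R, bch (e u)) := by
        refine Finset.sum_congr rfl fun e _ => ?_
        rw [show ∏ j, (if (∑ u ∈ R j, e u) = x j then (1:ℝ) else 0)
            = ∏ j, ((bch (x j) / 2) * ∏ u ∈ R j, bch (e u) + 1 / 2) from
          Finset.prod_congr rfl fun j _ => hind e j, hexp e, Finset.mul_sum]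
        exact Finset.sum_congr rfl fun S _ => by ring
    _ = ∑ S ∈ (univ : Finset (Fin t)).powerset,
          ((∏ j ∈ S, bch (x j) / 2) * (1 / 2 : ℝ) ^ (univ \ S).card) *
            ((1 - 2 * p) ^ (S.biUnion R).card) := by
        rw [Finset.sum_comm]
        refine Finset.sum_congr rfl fun S _ => ?_
        rw [← Finset.mul_sum, char_sum]
    _ = ∑ S ∈ (univ : Finset (Fin t)).powerset,
          (∏ j ∈ S, (bch (x j) / 2) * (1 - 2 * p) ^ r) * (1 / 2 : ℝ) ^ (univ \ S).card := by
        refine Finset.sum_congr rfl fun S hS => ?_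
        have hc : (S.biUnion R).card = r * S.card := by
          rw [Finset.card_biUnion (fun a _ b _ hab => hdisj a b hab)]
          rw [Finset.sum_congr rfl fun j _ => hcard j, Finset.sum_const, smul_eq_mul, mul_comm]
        rw [hc, pow_mul, Finset.prod_mul_distrib, Finset.prod_const]
        ring
    _ = ∏ j, ((bch (x j) / 2) * (1 - 2 * p) ^ r + 1 / 2) := by
        rw [Finset.prod_add]
        refine Finset.sum_congr rfl fun S _ => ?_
        rw [Finset.prod_const]
    _ = ∏ j, ((1 + bch (x j) * (1 - 2 * p) ^ r) / 2) := by
        refine Finset.prod_congr rfl fun j _ => ?_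
        ring

lemma term_le (a b : ℝ) (ha : 0 ≤ a) (hab : a ≤ b) (t k : ℕ) (hk : t ≤ 2 * k) (hkt : k ≤ t) :
    a ^ k * b ^ (t - k) ≤ (a * b) ^ ((t : ℝ) / 2) := by
  have hb : 0 ≤ b := ha.trans hab
  have hL : 0 ≤ a ^ k * b ^ (t - k) := by positivity
  have hR : 0 ≤ (a * b) ^ ((t : ℝ) / 2) := Real.rpow_nonneg (by positivity) _
  rw [← pow_le_pow_iff_left₀ hL hR (two_ne_zero)]
  have h2 : ((a * b) ^ ((t : ℝ) / 2)) ^ 2 = (a * b) ^ t := by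
    have h3 : ((t : ℝ) / 2) * ((2 : ℕ) : ℝ) = ((t : ℕ) : ℝ) := by push_cast; ring
    rw [← Real.rpow_natCast ((a * b) ^ ((t : ℝ) / 2)) 2, ← Real.rpow_mul (by positivity), h3,
      Real.rpow_natCast]
  have h1 : (a ^ k * b ^ (t - k)) ^ 2 ≤ (a * b) ^ t := by
    have heq : (a ^ k * b ^ (t - k)) ^ 2 = a ^ t * (a ^ (2 * k - t) * b ^ ((t - k) * 2)) := by
      rw [mul_pow, ← pow_mul, ← pow_mul, show k * 2 = t + (2 * k - t) by omega, pow_add]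
      ring
    rw [heq]
    have hle : a ^ (2 * k - t) * b ^ ((t - k) * 2) ≤ b ^ (2 * k - t) * b ^ ((t - k) * 2) := by
      have := pow_le_pow_left₀ ha hab (2 * k - t)
      exact mul_le_mul_of_nonneg_right this (by positivity)
    calc a ^ t * (a ^ (2 * k - t) * b ^ ((t - k) * 2))
        ≤ a ^ t * (b ^ (2 * k - t) * b ^ ((t - k) * 2)) :=
          mul_le_mul_of_nonneg_left hle (by positivity)
      _ = a ^ t * b ^ t := by rw [← pow_add, show 2 * k - t + (t - k) * 2 = t by omega]
      _ = (a * b) ^ t := (mul_pow a b t).symm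
  exact h1.trans_eq h2.symm

/-- **Bit decoding failure probability of majority-logic decoding over the BSC.**
Fix `t` pairwise disjoint recovery sets `R 1, …, R t ⊆ {1,…,n} \ {i}`, each of size
exactly `r`.  Let the error vector `e ∈ 𝔽₂^n` have i.i.d. Bernoulli(`p`) coordinates
with `p ∈ [0, 1/2)` (so the probability of a particular vector `e` is
`∏ u, (if e u = 1 then p else 1-p)`).  The `j`-th vote is wrong if `Σ_{u ∈ R j} e u = 1`
over `𝔽₂`.  Then the probability that at least half of the `t` votes are wrong is at
most `(1 - (1-2p)^{2r})^{t/2}`. -/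
theorem mld_bit_failure_bound_bsc
    (r t n : ℕ) (hr : 1 ≤ r) (ht : 1 ≤ t) (hn : 1 ≤ n)
    (i : Fin n) (R : Fin t → Finset (Fin n))
    (hdisj : ∀ j j', j ≠ j' → Disjoint (R j) (R j'))
    (hnoti : ∀ j, i ∉ R j)
    (hcard : ∀ j, (R j).card = r)
    (p : ℝ) (hp0 : 0 ≤ p) (hp1 : p < 1 / 2) :
    (∑ e ∈ univ.filter
        (fun e : Fin n → ZMod 2 =>
          t ≤ 2 * (univ.filter (fun j : Fin t => ∑ u ∈ R j, e u = 1)).card),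
        ∏ u, (if e u = 1 then p else 1 - p))
      ≤ (1 - (1 - 2 * p) ^ (2 * r)) ^ ((t : ℝ) / 2) := by
  classical
  have h2p0 : (0:ℝ) ≤ 1 - 2 * p := by linarith
  have h2p1 : (1:ℝ) - 2 * p ≤ 1 := by linarith
  have hγ0 : 0 ≤ (1 - 2 * p) ^ r := pow_nonneg h2p0 r
  have hγ1 : (1 - 2 * p) ^ r ≤ 1 := pow_le_one₀ h2p0 h2p1
  have ha : (0:ℝ) ≤ (1 - (1 - 2 * p) ^ r) / 2 := by linarith
  have hb : (0:ℝ) ≤ (1 + (1 - 2 * p) ^ r) / 2 := by linarith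
  have hab : (1 - (1 - 2 * p) ^ r) / 2 ≤ (1 + (1 - 2 * p) ^ r) / 2 := by linarith
  -- the fiberwise regrouping
  have key1 : ∀ x : Fin t → ZMod 2,
      (∑ e ∈ univ.filter (fun e : Fin n → ZMod 2 => (fun j => ∑ u ∈ R j, e u) = x),
        (if t ≤ 2 * (univ.filter (fun j : Fin t => ∑ u ∈ R j, e u = 1)).card
          then ∏ u, bw p (e u) else 0))
      = (if t ≤ 2 * (univ.filter (fun j : Fin t => x j = 1)).card
          then ∏ j, ((1 + bch (x j) * (1 - 2 * p) ^ r) / 2) else 0) := by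
    intro x
    have hcond : ∀ e ∈ univ.filter (fun e : Fin n → ZMod 2 => (fun j => ∑ u ∈ R j, e u) = x),
        (if t ≤ 2 * (univ.filter (fun j : Fin t => ∑ u ∈ R j, e u = 1)).card
          then ∏ u, bw p (e u) else 0)
        = (if t ≤ 2 * (univ.filter (fun j : Fin t => x j = 1)).card then (1:ℝ) else 0)
            * ∏ u, bw p (e u) := by
      intro e he
      have hpe : (fun j => ∑ u ∈ R j, e u) = x := (mem_filter.mp he).2
      have hfe : (univ.filter (fun j : Fin t => ∑ u ∈ R j, e u = 1))
          = univ.filter (fun j : Fin t => x j = 1) := by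
        refine Finset.filter_congr fun j _ => ?_
        rw [congrFun hpe j]
      rw [hfe]
      split_ifs <;> simp
    rw [Finset.sum_congr rfl hcond, ← Finset.mul_sum]
    have hEx : (∑ e ∈ univ.filter (fun e : Fin n → ZMod 2 => (fun j => ∑ u ∈ R j, e u) = x),
        ∏ u, bw p (e u)) = ∏ j, ((1 + bch (x j) * (1 - 2 * p) ^ r) / 2) := by
      rw [Finset.sum_filter, ← E_eq n t r p R hdisj hcard x]
      refine Finset.sum_congr rfl fun e _ => ?_
      rw [Finset.prod_boole]
      by_cases h : (fun j => ∑ u ∈ R j, e u) = x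
      · rw [if_pos h, if_pos fun j _ => congrFun h j, mul_one]
      · rw [if_neg h, if_neg fun hall => h (funext fun j => hall j (mem_univ j)), mul_zero]
    rw [hEx]
    split_ifs <;> simp
  calc (∑ e ∈ univ.filter
        (fun e : Fin n → ZMod 2 =>
          t ≤ 2 * (univ.filter (fun j : Fin t => ∑ u ∈ R j, e u = 1)).card),
        ∏ u, (if e u = 1 then p else 1 - p))
      = ∑ e : Fin n → ZMod 2,
          (if t ≤ 2 * (univ.filter (fun j : Fin t => ∑ u ∈ R j, e u = 1)).card
            then ∏ u, bw p (e u) else 0) := by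
        rw [Finset.sum_filter]; rfl
    _ = ∑ x : Fin t → ZMod 2,
          ∑ e ∈ univ.filter (fun e : Fin n → ZMod 2 => (fun j => ∑ u ∈ R j, e u) = x),
            (if t ≤ 2 * (univ.filter (fun j : Fin t => ∑ u ∈ R j, e u = 1)).card
              then ∏ u, bw p (e u) else 0) :=
        (Finset.sum_fiberwise univ (fun e : Fin n → ZMod 2 => fun j => ∑ u ∈ R j, e u) _).symm
    _ = ∑ x : Fin t → ZMod 2,
          (if t ≤ 2 * (univ.filter (fun j : Fin t => x j = 1)).card
            then ∏ j, ((1 + bch (x j) * (1 - 2 * p) ^ r) / 2) else 0) :=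
        Finset.sum_congr rfl fun x _ => key1 x
    _ ≤ ∑ x : Fin t → ZMod 2,
          (if t ≤ 2 * (univ.filter (fun j : Fin t => x j = 1)).card
            then (((1 - (1 - 2 * p) ^ r) / 2) * ((1 + (1 - 2 * p) ^ r) / 2)) ^ ((t:ℝ)/2)
            else 0) := by
        refine Finset.sum_le_sum fun x _ => ?_
        by_cases h : t ≤ 2 * (univ.filter (fun j : Fin t => x j = 1)).card
        · rw [if_pos h, if_pos h]
          have hμ : ∀ j : Fin t, (1 + bch (x j) * (1 - 2 * p) ^ r) / 2
              = if x j = 1 then (1 - (1 - 2 * p) ^ r) / 2 else (1 + (1 - 2 * p) ^ r) / 2 := by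
            intro j
            rcases zmod2_cases (x j) with h' | h' <;> rw [h'] <;>
              simp [bch, show (0 : ZMod 2) ≠ 1 from by decide] <;> ring
          rw [Finset.prod_congr rfl fun j _ => hμ j, Finset.prod_ite, Finset.prod_const,
            Finset.prod_const]
          have hk : (univ.filter (fun j : Fin t => x j = 1)).card ≤ t := by
            simpa using Finset.card_filter_le univ (fun j : Fin t => x j = 1)
          have hneg : (univ.filter (fun j : Fin t => ¬ x j = 1)).card
              = t - (univ.filter (fun j : Fin t => x j = 1)).card := by
            have := Finset.card_filter_add_card_filter_not
              (s := (univ : Finset (Fin t))) (fun j : Fin t => x j = 1)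
            simp only [Finset.card_univ, Fintype.card_fin] at this
            omega
          rw [hneg]
          exact term_le _ _ ha hab t _ h hk
        · rw [if_neg h, if_neg h]
    _ = ((univ.filter (fun x : Fin t → ZMod 2 =>
            t ≤ 2 * (univ.filter (fun j : Fin t => x j = 1)).card)).card : ℝ)
          * (((1 - (1 - 2 * p) ^ r) / 2) * ((1 + (1 - 2 * p) ^ r) / 2)) ^ ((t:ℝ)/2) := by
        rw [← Finset.sum_filter, Finset.sum_const, nsmul_eq_mul]
    _ ≤ (2:ℝ) ^ t
          * (((1 - (1 - 2 * p) ^ r) / 2) * ((1 + (1 - 2 * p) ^ r) / 2)) ^ ((t:ℝ)/2) := by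
        refine mul_le_mul_of_nonneg_right ?_ (Real.rpow_nonneg (by positivity) _)
        have hcle : (univ.filter (fun x : Fin t → ZMod 2 =>
            t ≤ 2 * (univ.filter (fun j : Fin t => x j = 1)).card)).card
            ≤ 2 ^ t := by
          calc _ ≤ (univ : Finset (Fin t → ZMod 2)).card := Finset.card_filter_le _ _
            _ = 2 ^ t := by
              rw [Finset.card_univ, Fintype.card_fun]
              simp
        exact_mod_cast hcle
    _ = (1 - (1 - 2 * p) ^ (2 * r)) ^ ((t : ℝ) / 2) := by
        have hab4 : 1 - (1 - 2 * p) ^ (2 * r)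
            = 4 * (((1 - (1 - 2 * p) ^ r) / 2) * ((1 + (1 - 2 * p) ^ r) / 2)) := by
          rw [pow_mul']
          ring
        have h4 : (4:ℝ) ^ ((t:ℝ)/2) = 2 ^ t := by
          rw [show (4:ℝ) = (2:ℝ) ^ (2:ℕ) from by norm_num, ← Real.rpow_natCast (2:ℝ) 2,
            ← Real.rpow_mul (by norm_num),
            show ((2:ℕ):ℝ) * ((t:ℝ)/2) = ((t:ℕ):ℝ) from by push_cast; ring,
            Real.rpow_natCast]
        rw [hab4, Real.mul_rpow (x := 4) (by norm_num) (mul_nonneg ha hb), h4]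
end

section
/- Fix integers r ≥ 1 and a function t : ℕ → ℕ with t(n)/log₂ n → ∞. Let p ∈ [0, 1/2) be fixed. For each n, let C_n ⊆ 𝔽₂^n be a set of positions 1, …, n such that every index i ∈ {1, …, n} admits t(n) pairwise disjoint subsets R^{1,i}, …, R^{t(n),i} ⊆ {1, …, n} \ {i}, each of size r. Let e ∈ 𝔽₂^n have i.i.d. Bernoulli(p) coordinates, and say that block decoding fails if there exists an index i for which at least t(n)/2 of the parities Σ_{u ∈ R^{j,i}} e_u equal 1. Then the probability of block decoding failure tends to 0 as n → ∞. -/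
/-!
For a fixed symbol, the error parities on its `t` disjoint recovery sets are independent, each odd
with probability `(1 - q) / 2` where `q = (1 - 2p) ^ r`; expanding in the characters of `ZMod 2`
makes this independence explicit. An exponential Markov bound with base `1 + q` then bounds the
probability that a majority of them is odd by `(1 - q ^ 2 / 2) ^ t`. A union bound over the `n`
symbols leaves `n (1 - q ^ 2 / 2) ^ t(n)`, which tends to `0` because `t(n) / log₂ n → ∞`.
-/

open Finset Filter Function

noncomputable section

theorem AddChar.map_sum_eq_prod {ι A M : Type*} [AddCommMonoid A] [CommMonoid M]
    (ψ : AddChar A M) (s : Finset ι) (f : ι → A) :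
    ψ (∑ i ∈ s, f i) = ∏ i ∈ s, ψ (f i) := by
  induction s using Finset.cons_induction with
  | empty => simp
  | cons a s ha ih => rw [sum_cons, prod_cons, AddChar.map_add_eq_mul, ih]

def paritySign : AddChar (ZMod 2) ℝ := AddChar.zmodChar 2 (by norm_num : (-1 : ℝ) ^ 2 = 1)

@[simp]
theorem paritySign_zero : paritySign 0 = 1 := AddChar.map_zero_eq_one _

@[simp]
theorem paritySign_one : paritySign 1 = -1 := by
  simp [paritySign, AddChar.zmodChar_apply, ZMod.val_one]

theorem eq_mul_paritySign_add (f : ZMod 2 → ℝ) (x : ZMod 2) :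
    f x = (f 0 - f 1) / 2 * paritySign x + (f 0 + f 1) / 2 := by
  obtain rfl | rfl : x = 0 ∨ x = 1 := by decide +revert
  all_goals simp only [paritySign_zero, paritySign_one]; ring

section BinarySymmetricChannel

variable {ι : Type*} [Fintype ι] (p : ℝ)

def bscWeight (e : ι → ZMod 2) : ℝ := ∏ u, if e u = 1 then p else 1 - p

variable {p}

theorem bscWeight_nonneg (hp0 : 0 ≤ p) (hp1 : p ≤ 1) (e : ι → ZMod 2) : 0 ≤ bscWeight p e :=
  prod_nonneg fun u _ => by split_ifs <;> linarith

variable (p) [DecidableEq ι]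

theorem sum_bscWeight_mul_prod (f : ι → ZMod 2 → ℝ) :
    ∑ e, bscWeight p e * ∏ u, f u (e u) = ∏ u, ((1 - p) * f u 0 + p * f u 1) := by
  simp_rw [bscWeight, ← prod_mul_distrib]
  calc _ = ∏ u, ∑ x : ZMod 2, (if x = 1 then p else 1 - p) * f u x := (Fintype.prod_sum _).symm
    _ = _ := prod_congr rfl fun u _ => by
      rw [show (univ : Finset (ZMod 2)) = {0, 1} from rfl, sum_pair zero_ne_one]
      simp

theorem sum_bscWeight_mul_paritySign (S : Finset ι) :
    ∑ e, bscWeight p e * paritySign (∑ u ∈ S, e u) = (1 - 2 * p) ^ #S := by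
  have hsign : ∀ e : ι → ZMod 2,
      paritySign (∑ u ∈ S, e u) = ∏ u, if u ∈ S then paritySign (e u) else 1 := by
    intro e
    rw [AddChar.map_sum_eq_prod, prod_ite_mem, univ_inter]
  simp_rw [hsign]
  rw [sum_bscWeight_mul_prod (f := fun u x => if u ∈ S then paritySign x else 1)]
  calc _ = ∏ u, if u ∈ S then 1 - 2 * p else 1 :=
        prod_congr rfl fun u _ => by split_ifs <;> simp; ring
    _ = _ := by rw [prod_ite_mem, univ_inter, prod_const]

-- Independence of the parities on disjoint sets: the `j`-th factor on the right is the expectation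
-- of `f j (∑ u ∈ R j, e u)` alone, by `sum_bscWeight_mul_paritySign`.
theorem sum_bscWeight_mul_prod_parity {κ : Type*} [Fintype κ] [DecidableEq κ]
    (R : κ → Finset ι) (hR : Pairwise (Disjoint on R)) (f : κ → ZMod 2 → ℝ) :
    ∑ e, bscWeight p e * ∏ j, f j (∑ u ∈ R j, e u)
      = ∏ j, ((f j 0 - f j 1) / 2 * (1 - 2 * p) ^ #(R j) + (f j 0 + f j 1) / 2) := by
  set b : κ → ℝ := fun j => (f j 0 - f j 1) / 2
  set a : κ → ℝ := fun j => (f j 0 + f j 1) / 2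
  have hR' : ∀ U : Finset κ, Set.PairwiseDisjoint U R := fun U _ _ _ _ h => hR h
  have hexpand : ∀ e : ι → ZMod 2, ∏ j, f j (∑ u ∈ R j, e u)
      = ∑ U, paritySign (∑ u ∈ U.biUnion R, e u) * ((∏ j ∈ U, b j) * ∏ j ∈ Uᶜ, a j) := by
    intro e
    simp_rw [fun j => eq_mul_paritySign_add (f j) (∑ u ∈ R j, e u)]
    rw [Fintype.prod_add]
    refine sum_congr rfl fun U _ => ?_
    rw [sum_biUnion (hR' U), AddChar.map_sum_eq_prod, prod_mul_distrib]
    ring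
  simp_rw [hexpand, mul_sum]
  rw [sum_comm, Fintype.prod_add]
  refine sum_congr rfl fun U _ => ?_
  simp_rw [← mul_assoc, ← sum_mul, sum_bscWeight_mul_paritySign, card_biUnion (hR' U),
    ← prod_pow_eq_pow_sum, prod_mul_distrib]
  ring

theorem sum_filter_le_sum_mul_div {α : Type*} [Fintype α] (P : α → Prop) [DecidablePred P]
    {w g : α → ℝ} {c : ℝ} (hc : 0 < c) (hw : ∀ x, 0 ≤ w x) (hg : ∀ x, 0 ≤ g x)
    (hP : ∀ x, P x → c ≤ g x) :
    ∑ x with P x, w x ≤ (∑ x, w x * g x) / c := by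
  rw [le_div_iff₀ hc, sum_mul]
  calc ∑ x with P x, w x * c ≤ ∑ x with P x, w x * g x :=
        sum_le_sum fun x hx => mul_le_mul_of_nonneg_left (hP x (mem_filter.mp hx).2) (hw x)
    _ ≤ ∑ x, w x * g x :=
        sum_le_sum_of_subset_of_nonneg (filter_subset _ _) fun x _ _ => mul_nonneg (hw x) (hg x)

theorem sum_bscWeight_majority_odd_le {κ : Type*} [Fintype κ] [DecidableEq κ]
    (hp0 : 0 ≤ p) (hp1 : p ≤ 1 / 2) {r : ℕ} (R : κ → Finset ι) (hR : Pairwise (Disjoint on R))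
    (hcard : ∀ j, #(R j) = r) :
    ∑ e with Fintype.card κ ≤ 2 * #{j | ∑ u ∈ R j, e u = 1}, bscWeight p e
      ≤ (1 - ((1 - 2 * p) ^ r) ^ 2 / 2) ^ Fintype.card κ := by
  set q := (1 - 2 * p) ^ r with hq_def
  have hq : 0 ≤ q := pow_nonneg (by linarith) r
  -- Markov's inequality for `(1 + q) ^ (2 · #odd parities)`; the base `1 + q` is chosen so that
  -- the bound collapses to `(1 - q ^ 2 / 2) ^ card κ`.
  set f : κ → ZMod 2 → ℝ := fun _ x => if x = 1 then (1 + q) ^ 2 else 1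
  have hmarkov : ∀ e : ι → ZMod 2, Fintype.card κ ≤ 2 * #{j | ∑ u ∈ R j, e u = 1} →
      (1 + q) ^ Fintype.card κ ≤ ∏ j, f j (∑ u ∈ R j, e u) := by
    intro e he
    rw [prod_ite, prod_const, prod_const_one, mul_one, ← pow_mul]
    exact pow_le_pow_right₀ (by linarith) he
  refine (sum_filter_le_sum_mul_div _ (by positivity) (bscWeight_nonneg hp0 (by linarith))
    (fun e => prod_nonneg fun j _ => by positivity) hmarkov).trans_eq ?_
  rw [sum_bscWeight_mul_prod_parity p R hR f, div_eq_iff (by positivity), ← mul_pow]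
  simp only [f, hcard, ← hq_def, if_pos, if_neg zero_ne_one, prod_const, card_univ]
  congr 1
  ring

end BinarySymmetricChannel

theorem sum_filter_exists_le {α κ : Type*} [Fintype α] [Fintype κ] (P : κ → α → Prop)
    [∀ i, DecidablePred (P i)] [DecidablePred fun x => ∃ i, P i x] {w : α → ℝ}
    (hw : ∀ x, 0 ≤ w x) :
    ∑ x with ∃ i, P i x, w x ≤ ∑ i, ∑ x with P i x, w x := by
  classical
  have himage :
      ({x | ∃ i, P i x} : Finset α) = (univ.sigma fun i => {x | P i x}).image Sigma.snd := by
    ext x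
    simp
  rw [himage]
  exact (sum_image_le_of_nonneg fun x _ => hw x).trans_eq (sum_sigma _ _ _)

theorem tendsto_natCast_mul_pow_of_tendsto_div_logb {b θ : ℝ} (hb : 1 < b) (hθ0 : 0 < θ)
    (hθ1 : θ < 1) {t : ℕ → ℕ} (ht : Tendsto (fun n : ℕ => (t n : ℝ) / Real.logb b n) atTop atTop) :
    Tendsto (fun n : ℕ => (n : ℝ) * θ ^ t n) atTop (nhds 0) := by
  have hlog : Tendsto (fun n : ℕ => Real.logb b n) atTop atTop :=
    (Real.tendsto_logb_atTop hb).comp tendsto_natCast_atTop_atTop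
  have hexponent : Tendsto (fun n : ℕ => Real.logb b n * (1 + t n / Real.logb b n * Real.logb b θ))
      atTop atBot :=
    hlog.atTop_mul_atBot₀ <| tendsto_atBot_add_const_left _ 1 <|
      ht.atTop_mul_const_of_neg (Real.logb_neg hb hθ0 hθ1)
  refine ((tendsto_rpow_atBot_of_base_gt_one b hb).comp hexponent).congr' ?_
  filter_upwards [eventually_gt_atTop 1] with n hn
  have hlogn : Real.logb b n ≠ 0 := (Real.logb_pos hb (by exact_mod_cast hn)).ne'
  have hb0 : 0 ≤ b := by linarith
  calc b ^ (Real.logb b n * (1 + t n / Real.logb b n * Real.logb b θ))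
      = b ^ Real.logb b n * (b ^ Real.logb b θ) ^ t n := by
        rw [← Real.rpow_mul_natCast hb0, ← Real.rpow_add (by linarith)]
        congr 1
        field_simp
    _ = n * θ ^ t n := by rw [Real.rpow_logb (by linarith) hb.ne' (by positivity),
        Real.rpow_logb (by linarith) hb.ne' hθ0]

theorem mld_block_failure_tendsto_zero_bsc_general
    (r : ℕ) (t : ℕ → ℕ)
    (ht : Tendsto (fun n : ℕ => (t n : ℝ) / Real.logb 2 n) atTop atTop)
    (p : ℝ) (hp0 : 0 ≤ p) (hp1 : p < 1 / 2)
    (R : (n : ℕ) → Fin n → Fin (t n) → Finset (Fin n))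
    (hdisj : ∀ n (i : Fin n) (j j' : Fin (t n)), j ≠ j' → Disjoint (R n i j) (R n i j'))
    (hcard : ∀ n (i : Fin n) (j : Fin (t n)), (R n i j).card = r) :
    Tendsto
      (fun n : ℕ =>
        ∑ e ∈ univ.filter
          (fun e : Fin n → ZMod 2 =>
            ∃ i : Fin n,
              t n ≤ 2 * (univ.filter (fun j : Fin (t n) => ∑ u ∈ R n i j, e u = 1)).card),
          ∏ u, (if e u = 1 then p else 1 - p))
      atTop (nhds 0) := by
  set q := (1 - 2 * p) ^ r
  have hq0 : 0 < q := pow_pos (by linarith) r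
  have hq1 : q ≤ 1 := pow_le_one₀ (by linarith) (by linarith)
  have hθ0 : 0 < 1 - q ^ 2 / 2 := by nlinarith
  have hθ1 : 1 - q ^ 2 / 2 < 1 := by nlinarith
  have hw : ∀ n (e : Fin n → ZMod 2), 0 ≤ bscWeight p e :=
    fun n => bscWeight_nonneg hp0 (by linarith)
  refine squeeze_zero (fun n => sum_nonneg fun e _ => hw n e) (fun n => ?_)
    (tendsto_natCast_mul_pow_of_tendsto_div_logb one_lt_two hθ0 hθ1 ht)
  calc _ ≤ ∑ i : Fin n, ∑ e with t n ≤ 2 * #{j | ∑ u ∈ R n i j, e u = 1}, bscWeight p e :=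
        sum_filter_exists_le _ (hw n)
    _ ≤ ∑ _i : Fin n, (1 - q ^ 2 / 2) ^ t n := sum_le_sum fun i _ => by
        simpa using sum_bscWeight_majority_odd_le p hp0 hp1.le (R n i) (hdisj n i) (hcard n i)
    _ = n * (1 - q ^ 2 / 2) ^ t n := by simp

/-- **MLD block-decoding success for LRCs on the BSC (Theorem 2 of the paper).**
Fix an integer `r ≥ 1` and an availability function `t : ℕ → ℕ` with
`t n / log₂ n → ∞`, and a fixed bit-flip probability `p ∈ [0, 1/2)`.  Suppose for
each blocklength `n` every index `i ∈ {1,…,n}` admits `t n` pairwise disjoint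
recovery sets of size `r` in `{1,…,n} \ {i}`.  Let the error vector
`e ∈ 𝔽₂^n` have i.i.d. Bernoulli(`p`) coordinates, and say block decoding fails if
some index `i` has at least `t n / 2` recovery sets of odd error parity.  Then the
probability of block decoding failure tends to `0` as `n → ∞`. -/
theorem mld_block_failure_tendsto_zero_bsc
    (r : ℕ) (hr : 1 ≤ r) (t : ℕ → ℕ)
    (ht : Tendsto (fun n : ℕ => (t n : ℝ) / Real.logb 2 n) atTop atTop)
    (p : ℝ) (hp0 : 0 ≤ p) (hp1 : p < 1 / 2)
    (R : (n : ℕ) → Fin n → Fin (t n) → Finset (Fin n))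
    (hdisj : ∀ n (i : Fin n) (j j' : Fin (t n)), j ≠ j' → Disjoint (R n i j) (R n i j'))
    (hnoti : ∀ n (i : Fin n) (j : Fin (t n)), i ∉ R n i j)
    (hcard : ∀ n (i : Fin n) (j : Fin (t n)), (R n i j).card = r) :
    Tendsto
      (fun n : ℕ =>
        ∑ e ∈ univ.filter
          (fun e : Fin n → ZMod 2 =>
            ∃ i : Fin n,
              t n ≤ 2 * (univ.filter (fun j : Fin (t n) => ∑ u ∈ R n i j, e u = 1)).card),
          ∏ u, (if e u = 1 then p else 1 - p))
      atTop (nhds 0) :=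
  mld_block_failure_tendsto_zero_bsc_general r t ht p hp0 hp1 R hdisj hcard
end
end

section
/- Let p ∈ (0, 1) and let m, n be integers with m = p·n and 0 < m < n. Then the central-type binomial probability satisfies C(n, m)·p^m·(1−p)^{n−m} ≥ 1/√(8·n·p·(1−p)), and consequently C(n, m)·p^m·(1−p)^{n−m} ≥ 1/√(2n). -/
open Real Stirling

private lemma my_stirling_pos {j : ℕ} (hj : 1 ≤ j) : 0 < stirlingSeq j := by
  cases j with
  | zero => omega
  | succ j => exact stirlingSeq'_pos j

private lemma my_stirling_anti {i j : ℕ} (hi : 1 ≤ i) (hij : i ≤ j) :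
    stirlingSeq j ≤ stirlingSeq i := by
  cases i with
  | zero => omega
  | succ i =>
    cases j with
    | zero => omega
    | succ j => exact stirlingSeq'_antitone (by omega : i ≤ j)

private lemma my_sqrt_pi_le {j : ℕ} (hj : 1 ≤ j) : Real.sqrt π ≤ stirlingSeq j := by
  cases j with
  | zero => omega
  | succ j =>
    have ht : Filter.Tendsto (stirlingSeq ∘ Nat.succ) Filter.atTop (nhds (Real.sqrt π)) :=
      tendsto_stirlingSeq_sqrt_pi.comp (Filter.tendsto_add_atTop_nat 1)
    exact stirlingSeq'_antitone.le_of_tendsto ht j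

private lemma my_a2 : stirlingSeq 2 = Real.exp 1 ^ 2 / 4 := by
  have h4 : Real.sqrt (2 * (2:ℕ)) = 2 := by
    rw [show (2 * ((2:ℕ):ℝ)) = 2 ^ 2 by norm_num, Real.sqrt_sq (by norm_num)]
  rw [stirlingSeq, h4, Nat.factorial_two]
  have he := Real.exp_pos 1
  field_simp
  ring

private lemma my_a3 : stirlingSeq 3 = 2 * Real.exp 1 ^ 3 / (9 * Real.sqrt 6) := by
  have h6 : Real.sqrt (2 * ((3:ℕ):ℝ)) = Real.sqrt 6 := by norm_num
  rw [stirlingSeq, h6]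
  have he := Real.exp_pos 1
  have h6p : (0:ℝ) < Real.sqrt 6 := Real.sqrt_pos.mpr (by norm_num)
  rw [show (Nat.factorial 3 : ℝ) = 6 by norm_num [Nat.factorial]]
  field_simp
  ring

private lemma my_sqrt_lb {c x : ℝ} (hc : 0 ≤ c) (h : c ^ 2 ≤ x) : c ≤ Real.sqrt x := by
  nlinarith [Real.sq_sqrt (le_trans (by positivity) h), Real.sqrt_nonneg x]

private lemma my_e4 : Real.exp 1 ^ 4 ≤ 54.599 := by
  have h : Real.exp 1 ^ 4 < 2.7182818286 ^ 4 :=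
    pow_lt_pow_left₀ Real.exp_one_lt_d9 (Real.exp_pos 1).le (by norm_num)
  nlinarith [h]

private lemma my_prod_le (m k : ℕ) (hm : 1 ≤ m) (hk : 1 ≤ k) :
    stirlingSeq m * stirlingSeq k ≤ 2 * stirlingSeq (m + k) := by
  have hpi : (1.772:ℝ) ≤ Real.sqrt π := my_sqrt_lb (by norm_num) (by nlinarith [Real.pi_gt_d6])
  have hpin : Real.sqrt π ≤ stirlingSeq (m + k) := my_sqrt_pi_le (by omega)
  have he := Real.exp_pos 1
  have h2 : (0:ℝ) < Real.sqrt 2 := Real.sqrt_pos.mpr (by norm_num)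
  have h6 : (0:ℝ) < Real.sqrt 6 := Real.sqrt_pos.mpr (by norm_num)
  have h22 : Real.sqrt 2 * Real.sqrt 2 = 2 := Real.mul_self_sqrt (by norm_num)
  have h66 : Real.sqrt 6 * Real.sqrt 6 = 6 := Real.mul_self_sqrt (by norm_num)
  have ha1 : stirlingSeq 1 = Real.exp 1 / Real.sqrt 2 := stirlingSeq_one
  rcases Nat.lt_or_ge m 2 with hm2 | hm2
  · -- m = 1
    interval_cases m
    rcases Nat.lt_or_ge k 2 with hk2 | hk2
    · -- k = 1 : equality  a1^2 = e^2/2 = 2 * a2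
      interval_cases k
      rw [ha1, my_a2, div_mul_div_comm, h22]
      apply le_of_eq
      ring
    rcases Nat.lt_or_ge k 3 with hk3 | hk3
    · -- k = 2, n = 3 :  a1 * a2 ≤ 2 * a3
      interval_cases k
      rw [ha1, my_a2, my_a3,
        show (2:ℝ) * (2 * Real.exp 1 ^ 3 / (9 * Real.sqrt 6))
          = 4 * Real.exp 1 ^ 3 / (9 * Real.sqrt 6) by ring,
        div_mul_div_comm, div_le_div_iff₀ (by positivity) (by positivity)]
      have h96 : (9:ℝ) * Real.sqrt 6 ≤ 16 * Real.sqrt 2 := by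
        nlinarith [Real.sqrt_nonneg 6, Real.sqrt_nonneg 2]
      nlinarith [pow_pos he 3, Real.sqrt_nonneg 6]
    · -- k ≥ 3 :  a1 * ak ≤ a1 * a3 ≤ 2√π
      have hak : stirlingSeq k ≤ stirlingSeq 3 := my_stirling_anti (by norm_num) hk3
      have ha1p : 0 < stirlingSeq 1 := my_stirling_pos le_rfl
      calc stirlingSeq 1 * stirlingSeq k ≤ stirlingSeq 1 * stirlingSeq 3 := by
            exact mul_le_mul_of_nonneg_left hak ha1p.le
        _ ≤ 2 * Real.sqrt π := by
            rw [ha1, my_a3]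
            rw [div_mul_div_comm, div_le_iff₀ (by positivity)]
            have h12 : (3.464:ℝ) ≤ Real.sqrt 2 * Real.sqrt 6 := by
              rw [← Real.sqrt_mul (by norm_num)]
              exact my_sqrt_lb (by norm_num) (by norm_num)
            nlinarith [my_e4, hpi, h12, pow_pos he 4]
        _ ≤ 2 * stirlingSeq (1 + k) := by linarith
  rcases Nat.lt_or_ge k 2 with hk2 | hk2
  · -- k = 1, m ≥ 2 (symmetric)
    interval_cases k
    rcases Nat.lt_or_ge m 3 with hm3 | hm3
    · interval_cases m
      rw [mul_comm, ha1, my_a2, my_a3,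
        show (2:ℝ) * (2 * Real.exp 1 ^ 3 / (9 * Real.sqrt 6))
          = 4 * Real.exp 1 ^ 3 / (9 * Real.sqrt 6) by ring,
        div_mul_div_comm, div_le_div_iff₀ (by positivity) (by positivity)]
      have h96 : (9:ℝ) * Real.sqrt 6 ≤ 16 * Real.sqrt 2 := by
        nlinarith [Real.sqrt_nonneg 6, Real.sqrt_nonneg 2]
      nlinarith [pow_pos he 3, Real.sqrt_nonneg 6]
    · have ham : stirlingSeq m ≤ stirlingSeq 3 := my_stirling_anti (by norm_num) hm3
      have ha1p : 0 < stirlingSeq 1 := my_stirling_pos le_rfl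
      calc stirlingSeq m * stirlingSeq 1 ≤ stirlingSeq 3 * stirlingSeq 1 := by
            exact mul_le_mul_of_nonneg_right ham ha1p.le
        _ ≤ 2 * Real.sqrt π := by
            rw [ha1, my_a3]
            rw [div_mul_div_comm, div_le_iff₀ (by positivity)]
            have h12 : (3.464:ℝ) ≤ Real.sqrt 6 * Real.sqrt 2 := by
              rw [← Real.sqrt_mul (by norm_num)]
              exact my_sqrt_lb (by norm_num) (by norm_num)
            nlinarith [my_e4, hpi, h12, pow_pos he 4]
        _ ≤ 2 * stirlingSeq (m + 1) := by linarith
  · -- both ≥ 2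
    have ham : stirlingSeq m ≤ stirlingSeq 2 := my_stirling_anti (by norm_num) hm2
    have hak : stirlingSeq k ≤ stirlingSeq 2 := my_stirling_anti (by norm_num) hk2
    have hakp : 0 < stirlingSeq k := my_stirling_pos hk
    have ha2p : 0 < stirlingSeq 2 := my_stirling_pos (by norm_num)
    calc stirlingSeq m * stirlingSeq k ≤ stirlingSeq 2 * stirlingSeq 2 := by
          exact mul_le_mul ham hak hakp.le ha2p.le
      _ ≤ 2 * Real.sqrt π := by rw [my_a2]; nlinarith [my_e4, hpi, pow_pos he 4]
      _ ≤ 2 * stirlingSeq (m + k) := by linarith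

/-- **Lower bound on the central binomial probability**
(MacWilliams–Sloane, Ch. 10, Lemma 7).  Let `p ∈ (0,1)` and let `m, n` be integers
with `m = p n` and `0 < m < n`.  Then
`C(n,m) p^m (1-p)^{n-m} ≥ 1/√(8 n p (1-p))`, and consequently
`C(n,m) p^m (1-p)^{n-m} ≥ 1/√(2n)`. -/
theorem binomial_central_term_lower_bound
    (p : ℝ) (hp0 : 0 < p) (hp1 : p < 1) (n m : ℕ)
    (hm : (m : ℝ) = p * n) (hm0 : 0 < m) (hmn : m < n) :
    1 / Real.sqrt (8 * n * p * (1 - p))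
        ≤ (n.choose m : ℝ) * p ^ m * (1 - p) ^ (n - m)
    ∧ 1 / Real.sqrt (2 * n)
        ≤ (n.choose m : ℝ) * p ^ m * (1 - p) ^ (n - m) := by
  set k := n - m with hkdef
  have hnk : n = m + k := by omega
  have hk0 : 0 < k := by omega
  have hn0 : 0 < n := by omega
  have hnR : (0:ℝ) < n := by exact_mod_cast hn0
  have hmR : (0:ℝ) < m := by exact_mod_cast hm0
  have hkr : (k:ℝ) = (1 - p) * n := by
    have : (k:ℝ) = (n:ℝ) - m := by rw [hnk]; push_cast; ring
    rw [this, hm]; ring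
  have hkR : (0:ℝ) < k := by exact_mod_cast hk0
  set E := Real.exp 1 with hE
  have hEp : (0:ℝ) < E := Real.exp_pos 1
  have fact_eq : ∀ j : ℕ, 1 ≤ j →
      (j.factorial : ℝ) = stirlingSeq j * (Real.sqrt (2 * j) * ((j:ℝ) / E) ^ j) := by
    intro j hj
    have hjR : (0:ℝ) < j := by exact_mod_cast hj
    rw [stirlingSeq, div_mul_cancel₀]
    positivity
  have hchoose : (n.choose m : ℝ) * (m.factorial : ℝ) * (k.factorial : ℝ) = (n.factorial : ℝ) := by
    exact_mod_cast Nat.choose_mul_factorial_mul_factorial hmn.le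
  have hpm : ((m:ℝ) / E) ^ m = p ^ m * ((n:ℝ) / E) ^ m := by
    rw [← mul_pow]; congr 1; rw [hm]; ring
  have hqk : ((k:ℝ) / E) ^ k = (1 - p) ^ k * ((n:ℝ) / E) ^ k := by
    rw [← mul_pow]; congr 1; rw [hkr]; ring
  have keyeq : (n.choose m : ℝ) * p ^ m * (1 - p) ^ k *
      (stirlingSeq m * Real.sqrt (2 * m) * (stirlingSeq k * Real.sqrt (2 * k))) *
      (((n:ℝ) / E) ^ m * ((n:ℝ) / E) ^ k)
      = stirlingSeq n * Real.sqrt (2 * n) * (((n:ℝ) / E) ^ m * ((n:ℝ) / E) ^ k) := by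
    calc (n.choose m : ℝ) * p ^ m * (1 - p) ^ k *
        (stirlingSeq m * Real.sqrt (2 * m) * (stirlingSeq k * Real.sqrt (2 * k))) *
        (((n:ℝ) / E) ^ m * ((n:ℝ) / E) ^ k)
        = (n.choose m : ℝ) * (stirlingSeq m * (Real.sqrt (2 * m) * ((m:ℝ) / E) ^ m)) *
          (stirlingSeq k * (Real.sqrt (2 * k) * ((k:ℝ) / E) ^ k)) := by
          rw [hpm, hqk]; ring
      _ = (n.choose m : ℝ) * (m.factorial : ℝ) * (k.factorial : ℝ) := by
          rw [← fact_eq m hm0, ← fact_eq k hk0]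
      _ = (n.factorial : ℝ) := hchoose
      _ = stirlingSeq n * (Real.sqrt (2 * n) * ((n:ℝ) / E) ^ n) := fact_eq n hn0
      _ = stirlingSeq n * Real.sqrt (2 * n) * (((n:ℝ) / E) ^ m * ((n:ℝ) / E) ^ k) := by
          rw [hnk, pow_add]; ring
  have hX : (((n:ℝ) / E) ^ m * ((n:ℝ) / E) ^ k) ≠ 0 := by positivity
  have keyeq2 : (n.choose m : ℝ) * p ^ m * (1 - p) ^ k *
      (stirlingSeq m * Real.sqrt (2 * m) * (stirlingSeq k * Real.sqrt (2 * k)))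
      = stirlingSeq n * Real.sqrt (2 * n) := mul_right_cancel₀ hX keyeq
  have h2m : (0:ℝ) < 2 * (m:ℝ) := by linarith
  have h2k : (0:ℝ) < 2 * (k:ℝ) := by linarith
  have h8 : (0:ℝ) < 8 * n * p * (1 - p) := by
    have : (0:ℝ) < 8 * n := by linarith
    have := mul_pos this hp0
    exact mul_pos this (by linarith)
  have hD : (0:ℝ) < stirlingSeq m * Real.sqrt (2 * m) * (stirlingSeq k * Real.sqrt (2 * k)) := by
    have h1 := my_stirling_pos hm0
    have h2 := my_stirling_pos hk0
    have h3 : (0:ℝ) < Real.sqrt (2 * m) := Real.sqrt_pos.mpr h2m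
    have h4 : (0:ℝ) < Real.sqrt (2 * k) := Real.sqrt_pos.mpr h2k
    positivity
  have hprod : Real.sqrt (8 * n * p * (1 - p)) * Real.sqrt (2 * n)
      = 2 * (Real.sqrt (2 * m) * Real.sqrt (2 * k)) := by
    rw [← Real.sqrt_mul h8.le, ← Real.sqrt_mul h2m.le]
    have h1 : (8:ℝ) * n * p * (1 - p) * (2 * n) = 4 * (2 * (m:ℝ) * (2 * (k:ℝ))) := by
      rw [hm, hkr]; ring
    rw [h1, Real.sqrt_mul (by norm_num : (0:ℝ) ≤ 4),
        show ((4:ℝ)) = 2 ^ 2 by norm_num, Real.sqrt_sq (by norm_num)]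
  have hab : stirlingSeq m * stirlingSeq k ≤ 2 * stirlingSeq n := by
    rw [hnk]; exact my_prod_le m k hm0 hk0
  have hS : (0:ℝ) < Real.sqrt (8 * n * p * (1 - p)) := Real.sqrt_pos.mpr h8
  have hDle : stirlingSeq m * Real.sqrt (2 * m) * (stirlingSeq k * Real.sqrt (2 * k))
      ≤ stirlingSeq n * Real.sqrt (2 * n) * Real.sqrt (8 * n * p * (1 - p)) := by
    calc stirlingSeq m * Real.sqrt (2 * m) * (stirlingSeq k * Real.sqrt (2 * k))
        = stirlingSeq m * stirlingSeq k * (Real.sqrt (2 * m) * Real.sqrt (2 * k)) := by ring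
      _ ≤ 2 * stirlingSeq n * (Real.sqrt (2 * m) * Real.sqrt (2 * k)) := by
          apply mul_le_mul_of_nonneg_right hab
          positivity
      _ = stirlingSeq n * (2 * (Real.sqrt (2 * m) * Real.sqrt (2 * k))) := by ring
      _ = stirlingSeq n * (Real.sqrt (8 * n * p * (1 - p)) * Real.sqrt (2 * n)) := by
          rw [hprod]
      _ = stirlingSeq n * Real.sqrt (2 * n) * Real.sqrt (8 * n * p * (1 - p)) := by ring
  have main : 1 / Real.sqrt (8 * n * p * (1 - p))
      ≤ (n.choose m : ℝ) * p ^ m * (1 - p) ^ k := by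
    rw [div_le_iff₀ hS]
    refine le_of_mul_le_mul_right ?_ hD
    calc 1 * (stirlingSeq m * Real.sqrt (2 * m) * (stirlingSeq k * Real.sqrt (2 * k)))
        = stirlingSeq m * Real.sqrt (2 * m) * (stirlingSeq k * Real.sqrt (2 * k)) := one_mul _
      _ ≤ stirlingSeq n * Real.sqrt (2 * n) * Real.sqrt (8 * n * p * (1 - p)) := hDle
      _ = (n.choose m : ℝ) * p ^ m * (1 - p) ^ k * Real.sqrt (8 * n * p * (1 - p)) *
          (stirlingSeq m * Real.sqrt (2 * m) * (stirlingSeq k * Real.sqrt (2 * k))) := by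
          rw [← keyeq2]; ring
  refine ⟨main, le_trans ?_ main⟩
  apply one_div_le_one_div_of_le hS
  apply Real.sqrt_le_sqrt
  nlinarith [sq_nonneg (2 * p - 1), hnR]
end

section
/- Fix integers r ≥ 1, an unbounded nondecreasing availability function t : ℕ → ℕ, and a constant c ≥ 3/2. For each n, let p_n = 1 − (c·log₂ n / t(n))^{1/r} (assume n is large enough that 0 < c·log₂ n / t(n) < 1), and suppose every index i ∈ {1, …, n} has t(n) pairwise disjoint recovery sets of size r in {1, …, n} \ {i}. Call an erasure pattern Z ∈ {0,1}^n of Hamming weight w_n = p_n·n uncorrectable if there exists an index i all of whose recovery sets contain at least one coordinate u with Z_u = 1. Then the fraction (number of uncorrectable weight-w_n patterns)/(number of all weight-w_n patterns) tends to 0 as n → ∞. -/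
/-!
The coordinates that survive an erasure pattern of weight `w` form a uniformly random
`m`-subset `M` of the `n` coordinates, `m = n - w ≥ q n` where `q = (c log₂ n / t)^{1/r}`;
symbol `i` is lost exactly when none of its `t` disjoint recovery sets lies inside `M`.
Reveal the recovery sets of `i` one at a time. The `m`-sets containing none of the sets seen so
far are determined by their part outside the next set `S`, and form a down-set there; double
counting such an `m`-set against its completions to a superset of `S` shows that at least a
fraction `x^r`, `x = (m - r + 1)/(n - r + 1)`, of them contain `S`. Hence `i` is lost with
probability at most `(1 - x^r)^t ≤ exp(-t x^r)`. Since `x ≥ q (1 - r/(q n))` and `q n ≥ c log₂ n`,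
we get `t x^r ≥ (9/10) t q^r = (9/10) c log₂ n ≥ (5/4) log n` once `log₂ n ≥ 10 r²`, and a union
bound over the `n` symbols bounds the fraction of uncorrectable patterns by `n^{-1/4}`.
-/

open Finset Filter

/-- The Hamming weight of an erasure pattern in `{0,1}^n`: its number of
coordinates equal to `1` (`true`). -/
def erasureWt {n : ℕ} (Z : Fin n → Bool) : ℕ :=
  (univ.filter (fun u => Z u = true)).card

open Function

theorem choose_mul_pow_le_choose_mul_pow {a b k M : ℕ} (h : M + k ≤ b + 1) :
    a.choose k * M ^ k ≤ b.choose k * a ^ k := by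
  have hM : M ^ k ≤ b.descFactorial k :=
    (Nat.pow_le_pow_left (by omega) k).trans (b.pow_sub_le_descFactorial k)
  refine Nat.le_of_mul_le_mul_left ?_ (Nat.factorial_pos k)
  calc k.factorial * (a.choose k * M ^ k) = a.descFactorial k * M ^ k := by
        rw [Nat.descFactorial_eq_factorial_mul_choose]; ring
    _ ≤ a ^ k * b.descFactorial k := Nat.mul_le_mul (a.descFactorial_le_pow k) hM
    _ = k.factorial * (b.choose k * a ^ k) := by
        rw [Nat.descFactorial_eq_factorial_mul_choose]; ring

theorem card_mul_le_card_of_pairwise_disjoint {ι α : Type*} [Fintype ι] [Fintype α]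
    [DecidableEq α] {S : ι → Finset α} (hS : Pairwise (Disjoint on S)) {r : ℕ}
    (hc : ∀ j, #(S j) = r) : Fintype.card ι * r ≤ Fintype.card α := by
  calc Fintype.card ι * r = #(univ.biUnion S) := by
        rw [card_biUnion fun i _ j _ h => hS h]; simp [hc]
    _ ≤ Fintype.card α := card_le_univ _

section Supersets

variable {α : Type*} [DecidableEq α] {S M₀ M₁ : Finset α}

theorem eq_union_of_sdiff_subset (h : M₁ \ S ⊆ M₀) :
    M₀ = (M₁ \ S) ∪ (M₀ ∩ S) ∪ (M₀ \ M₁) := by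
  ext x
  have := @h x
  grind

variable [Fintype α] {m s : ℕ}

theorem choose_le_card_filter_subset (hM₀ : #M₀ = m) (hs : #(M₀ ∩ S) = s) (hSm : #S ≤ m) :
    (m - s).choose (#S - s) ≤ #{M ∈ powersetCard m univ | S ⊆ M ∧ M \ S ⊆ M₀} := by
  have hsS : s ≤ #S := hs ▸ card_le_card inter_subset_right
  have hM₀S : #(M₀ \ S) = m - s := by have := card_inter_add_card_sdiff M₀ S; omega
  calc (m - s).choose (#S - s) = #(powersetCard (m - #S) (M₀ \ S)) := by
        rw [card_powersetCard, hM₀S, ← Nat.choose_symm (by omega)]; congr 1; omega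
    _ ≤ _ := by
      refine card_le_card_of_injOn (S ∪ ·) (fun P hP => ?_) (fun P hP Q hQ hPQ => ?_)
      all_goals simp only [mem_coe, mem_powersetCard] at *
      · have hdisj : Disjoint S P := disjoint_of_subset_right hP.1 disjoint_sdiff
        simp only [mem_filter, mem_powersetCard, subset_univ, true_and,
          card_union_of_disjoint hdisj, hP.2, subset_union_left, union_sdiff_cancel_left hdisj]
        exact ⟨by omega, hP.1.trans sdiff_subset⟩
      · rw [← union_sdiff_cancel_left (disjoint_of_subset_right hP.1 disjoint_sdiff),
          ← union_sdiff_cancel_left (disjoint_of_subset_right hQ.1 disjoint_sdiff)]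
        exact congrArg (· \ S) hPQ

theorem card_filter_sdiff_subset_le (hM₁ : #M₁ = m) (hSM₁ : S ⊆ M₁) :
    #{M ∈ powersetCard m univ | #(M ∩ S) = s ∧ M₁ \ S ⊆ M}
      ≤ (#S).choose s * (Fintype.card α - m).choose (#S - s) := by
  calc _ ≤ #(powersetCard s S ×ˢ powersetCard (#S - s) M₁ᶜ) := by
        refine card_le_card_of_injOn (fun M => (M ∩ S, M \ M₁)) (fun M hM => ?_)
          (fun M hM M' hM' h => ?_)
        all_goals simp only [mem_coe, mem_filter, mem_powersetCard, subset_univ, true_and] at *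
        · have hinter : M ∩ M₁ = (M₁ \ S) ∪ (M ∩ S) := by
            ext x; have := @hM.2.2 x; have := @hSM₁ x; grind
          have h1 : #(M₁ \ S) = m - #S := by rw [card_sdiff_of_subset hSM₁, hM₁]
          have h2 : #((M₁ \ S) ∪ (M ∩ S)) = #(M₁ \ S) + #(M ∩ S) :=
            card_union_of_disjoint
              (disjoint_of_subset_right inter_subset_right disjoint_sdiff_self_left)
          have h3 := card_inter_add_card_sdiff M M₁
          have h4 : #S ≤ m := hM₁ ▸ card_le_card hSM₁
          simp only [mem_product, mem_powersetCard, inter_subset_right, true_and]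
          refine ⟨hM.2.1, fun x hx => mem_compl.2 (mem_sdiff.1 hx).2, ?_⟩
          rw [hinter] at h3
          omega
        · simp only [Prod.mk.injEq] at h
          rw [eq_union_of_sdiff_subset hM.2.2, eq_union_of_sdiff_subset hM'.2.2, h.1, h.2]
    _ = _ := by rw [card_product, card_powersetCard, card_powersetCard, card_compl, hM₁]

variable {P : Finset α → Prop} [DecidablePred P]

/- Double count the pairs `(M₀, M₁)` of `m`-sets with `S ⊆ M₁` and `M₁ \ S ⊆ M₀`: each `M₀`
meeting `S` in `s` points has `C(m - s, r - s)` partners, and each `M₁` at most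
`C(r, s) C(n - m, r - s)`, since `M₀` is determined by `M₀ ∩ S` and `M₀ \ M₁`. -/
theorem card_fiber_mul_choose_le (hP : ∀ M₀ M₁, M₁ \ S ⊆ M₀ → P M₀ → P M₁) (hSm : #S ≤ m) :
    #{M ∈ powersetCard m univ | P M ∧ #(M ∩ S) = s} * (m - s).choose (#S - s)
      ≤ #{M ∈ powersetCard m univ | P M ∧ S ⊆ M}
        * ((#S).choose s * (Fintype.card α - m).choose (#S - s)) := by
  refine card_mul_le_card_mul (fun M₀ M₁ => M₁ \ S ⊆ M₀) (fun M₀ hM₀ => ?_) (fun M₁ hM₁ => ?_)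
  · simp only [mem_filter, mem_powersetCard] at hM₀
    refine (choose_le_card_filter_subset hM₀.1.2 hM₀.2.2 hSm).trans
      (card_le_card fun M₁ hM₁ => ?_)
    simp only [mem_filter, mem_bipartiteAbove, mem_powersetCard] at hM₁ ⊢
    exact ⟨⟨hM₁.1, hP _ _ hM₁.2.2 hM₀.2.1, hM₁.2.1⟩, hM₁.2.2⟩
  · simp only [mem_filter, mem_powersetCard] at hM₁
    refine (card_le_card fun M₀ hM₀ => ?_).trans (card_filter_sdiff_subset_le hM₁.1.2 hM₁.2.2)
    simp only [mem_filter, mem_bipartiteBelow, mem_powersetCard] at hM₀ ⊢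
    exact ⟨hM₀.1.1, hM₀.1.2.2, hM₀.2⟩

theorem card_fiber_mul_pow_le (hP : ∀ M₀ M₁, M₁ \ S ⊆ M₀ → P M₀ → P M₁) (hSm : #S ≤ m)
    (hs : s ≤ #S) :
    #{M ∈ powersetCard m univ | P M ∧ #(M ∩ S) = s} * (m - #S + 1) ^ #S
      ≤ #{M ∈ powersetCard m univ | P M ∧ S ⊆ M}
        * ((#S).choose s * (Fintype.card α - m) ^ (#S - s) * (m - #S + 1) ^ s) := by
  set r := #S
  set k := m - r + 1
  set F := #{M ∈ powersetCard m univ | P M ∧ #(M ∩ S) = s}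
  set b := #{M ∈ powersetCard m univ | P M ∧ S ⊆ M}
  set C := (m - s).choose (r - s)
  set D := (Fintype.card α - m).choose (r - s)
  have hcount : F * C ≤ b * (r.choose s * D) := card_fiber_mul_choose_le hP hSm
  have hchoose : D * k ^ (r - s) ≤ C * (Fintype.card α - m) ^ (r - s) :=
    choose_mul_pow_le_choose_mul_pow (by omega)
  refine Nat.le_of_mul_le_mul_left ?_ (Nat.choose_pos (by omega : r - s ≤ m - s))
  calc C * (F * k ^ r) = (F * C) * k ^ (r - s) * k ^ s := by
        rw [← Nat.sub_add_cancel hs, pow_add, Nat.add_sub_cancel]; ring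
    _ ≤ b * (r.choose s * D) * k ^ (r - s) * k ^ s := by gcongr
    _ = b * r.choose s * (D * k ^ (r - s)) * k ^ s := by ring
    _ ≤ b * r.choose s * (C * (Fintype.card α - m) ^ (r - s)) * k ^ s := by gcongr
    _ = C * (b * (r.choose s * (Fintype.card α - m) ^ (r - s) * k ^ s)) := by ring

theorem card_filter_mul_pow_le (hP : ∀ M₀ M₁, M₁ \ S ⊆ M₀ → P M₀ → P M₁) (hSm : #S ≤ m)
    (hm : m ≤ Fintype.card α) :
    #{M ∈ powersetCard m univ | P M} * (m - #S + 1) ^ #S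
      ≤ #{M ∈ powersetCard m univ | P M ∧ S ⊆ M} * (Fintype.card α - #S + 1) ^ #S := by
  set r := #S
  set N := Fintype.card α
  set k := m - r + 1
  have hfib : #{M ∈ powersetCard m univ | P M}
      = ∑ s ∈ range (r + 1), #{M ∈ powersetCard m univ | P M ∧ #(M ∩ S) = s} := by
    rw [card_eq_sum_card_fiberwise (f := fun M => #(M ∩ S)) (t := range (r + 1))]
    · simp only [filter_filter]
    · exact fun M _ => mem_range.2 (Nat.lt_succ_of_le (card_le_card inter_subset_right))
  have hbinom : ∑ s ∈ range (r + 1), r.choose s * (N - m) ^ (r - s) * k ^ s = (N - r + 1) ^ r := by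
    rw [show N - r + 1 = k + (N - m) by omega, add_pow]
    exact sum_congr rfl fun s _ => by rw [Nat.cast_id]; ring
  calc _ = ∑ s ∈ range (r + 1), #{M ∈ powersetCard m univ | P M ∧ #(M ∩ S) = s} * k ^ r := by
        rw [hfib, sum_mul]
    _ ≤ ∑ s ∈ range (r + 1), #{M ∈ powersetCard m univ | P M ∧ S ⊆ M}
          * (r.choose s * (N - m) ^ (r - s) * k ^ s) :=
        sum_le_sum fun s hs => card_fiber_mul_pow_le hP hSm (Nat.lt_succ_iff.1 (mem_range.1 hs))
    _ = _ := by rw [← mul_sum, hbinom]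

theorem div_pow_mul_card_filter_le (hP : ∀ M₀ M₁, M₁ \ S ⊆ M₀ → P M₀ → P M₁) (hSm : #S ≤ m)
    (hm : m ≤ Fintype.card α) :
    (((m - #S + 1 : ℕ) : ℝ) / (Fintype.card α - #S + 1 : ℕ)) ^ #S
        * #{M ∈ powersetCard m univ | P M}
      ≤ #{M ∈ powersetCard m univ | P M ∧ S ⊆ M} := by
  rw [div_pow, div_mul_eq_mul_div, div_le_iff₀ (by positivity), mul_comm]
  exact_mod_cast card_filter_mul_pow_le hP hSm hm

omit [DecidablePred P]

theorem card_filter_forall_not_subset_le {ι : Type*} {R : ι → Finset α}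
    (hR : Pairwise (Disjoint on R)) {r : ℕ} (hr : ∀ j, #(R j) = r) (hrm : r ≤ m)
    (hm : m ≤ Fintype.card α) (J : Finset ι) :
    (#{M ∈ powersetCard m univ | ∀ j ∈ J, ¬ R j ⊆ M} : ℝ)
      ≤ (1 - (((m - r + 1 : ℕ) : ℝ) / (Fintype.card α - r + 1 : ℕ)) ^ r) ^ #J
        * (Fintype.card α).choose m := by
  classical
  set x : ℝ := ((m - r + 1 : ℕ) : ℝ) / (Fintype.card α - r + 1 : ℕ)
  have hx : x ^ r ≤ 1 :=
    pow_le_one₀ (by positivity) (div_le_one_of_le₀ (by gcongr) (by positivity))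
  induction J using Finset.induction_on with
  | empty => simp [card_powersetCard]
  | insert j₀ J hj₀ ih =>
    set A : Finset (Finset α) := {M ∈ powersetCard m univ | ∀ j ∈ J, ¬ R j ⊆ M}
    have hP : ∀ M₀ M₁ : Finset α, M₁ \ R j₀ ⊆ M₀ →
        (∀ j ∈ J, ¬ R j ⊆ M₀) → ∀ j ∈ J, ¬ R j ⊆ M₁ := by
      intro M₀ M₁ h hM₀ j hj hsub
      refine hM₀ j hj fun u hu => h (mem_sdiff.2 ⟨hsub hu, ?_⟩)
      exact disjoint_left.1 (hR (ne_of_mem_of_not_mem hj hj₀)) hu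
    have hcontain := div_pow_mul_card_filter_le hP ((hr j₀).symm ▸ hrm) hm
    rw [hr j₀] at hcontain
    have hsplit := card_filter_add_card_filter_not (s := A) (fun M => R j₀ ⊆ M)
    have hinsert : {M ∈ powersetCard m (univ : Finset α) | ∀ j ∈ insert j₀ J, ¬ R j ⊆ M}
        = {M ∈ A | ¬ R j₀ ⊆ M} := by
      simp only [A, filter_filter, forall_mem_insert, and_comm]
    rw [hinsert, card_insert_of_notMem hj₀, pow_succ]
    simp only [A, filter_filter] at hsplit hcontain ⊢
    have hsplitR : (#{M ∈ powersetCard m univ | (∀ j ∈ J, ¬ R j ⊆ M) ∧ ¬ R j₀ ⊆ M} : ℝ)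
        = #A - #{M ∈ powersetCard m univ | (∀ j ∈ J, ¬ R j ⊆ M) ∧ R j₀ ⊆ M} := by
      rw [eq_sub_iff_add_eq, add_comm]; exact_mod_cast hsplit
    rw [hsplitR]
    calc _ ≤ (#A : ℝ) - x ^ r * #A := by linarith
      _ = (1 - x ^ r) * #A := by ring
      _ ≤ (1 - x ^ r) * ((1 - x ^ r) ^ #J * (Fintype.card α).choose m) := by gcongr
      _ = _ := by ring

end Supersets

section ErasurePatterns

variable {n : ℕ}

def unerased (Z : Fin n → Bool) : Finset (Fin n) := {u | Z u = false}

theorem card_unerased (Z : Fin n → Bool) : #(unerased Z) = n - erasureWt Z := by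
  have h := card_filter_add_card_filter_not (s := (univ : Finset (Fin n))) (Z · = true)
  simp only [Bool.not_eq_true, card_univ, Fintype.card_fin] at h
  rw [unerased, erasureWt]
  omega

theorem unerased_decide_notMem (M : Finset (Fin n)) :
    unerased (fun u => decide (u ∉ M)) = M := by
  ext u
  simp [unerased]

theorem card_filter_erasureWt_eq {w : ℕ} (hw : w ≤ n) (Q : Finset (Fin n) → Prop)
    [DecidablePred Q] :
    #{Z : Fin n → Bool | erasureWt Z = w ∧ Q (unerased Z)}
      = #{M ∈ powersetCard (n - w) univ | Q M} := by
  refine card_nbij' unerased (fun M u => decide (u ∉ M)) (fun Z hZ => ?_) (fun M hM => ?_)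
    (fun Z _ => ?_) (fun M _ => unerased_decide_notMem M)
  · simp only [coe_filter, mem_univ, true_and, Set.mem_ofPred_eq, mem_powersetCard,
      subset_univ] at hZ ⊢
    exact ⟨by rw [card_unerased, hZ.1], hZ.2⟩
  · simp only [coe_filter, mem_univ, true_and, Set.mem_ofPred_eq, mem_powersetCard,
      subset_univ, unerased_decide_notMem] at hM ⊢
    have h := card_unerased fun u => decide (u ∉ M)
    have hle : erasureWt (fun u => decide (u ∉ M)) ≤ n := (card_le_univ _).trans_eq (by simp)
    rw [unerased_decide_notMem] at h
    exact ⟨by omega, hM.2⟩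
  · funext u
    simp [unerased]

theorem card_filter_erasureWt_eq_choose {w : ℕ} (hw : w ≤ n) :
    #{Z : Fin n → Bool | erasureWt Z = w} = n.choose (n - w) := by
  simpa using card_filter_erasureWt_eq hw fun _ => True

theorem card_uncorrectable_le {r w T : ℕ} (hwn : w ≤ n) (hrw : r ≤ n - w)
    (R : Fin n → Fin T → Finset (Fin n)) (hR : ∀ i, Pairwise (Disjoint on R i))
    (hc : ∀ i j, #(R i j) = r) :
    (#{Z : Fin n → Bool | erasureWt Z = w ∧ ∃ i, ∀ j, ∃ u ∈ R i j, Z u = true} : ℝ)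
      ≤ n * (1 - (((n - w - r + 1 : ℕ) : ℝ) / (n - r + 1 : ℕ)) ^ r) ^ T
        * #{Z : Fin n → Bool | erasureWt Z = w} := by
  have hlost (i : Fin n) :
      (#{Z : Fin n → Bool | erasureWt Z = w ∧ ∀ j, ∃ u ∈ R i j, Z u = true} : ℝ)
        ≤ (1 - (((n - w - r + 1 : ℕ) : ℝ) / (n - r + 1 : ℕ)) ^ r) ^ T
          * #{Z : Fin n → Bool | erasureWt Z = w} := by
    have hiff (Z : Fin n → Bool) :
        (∀ j, ∃ u ∈ R i j, Z u = true) ↔ ∀ j ∈ univ, ¬ R i j ⊆ unerased Z := by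
      simp [unerased, not_subset]
    rw [filter_congr fun Z _ => and_congr_right' (hiff Z),
      card_filter_erasureWt_eq hwn fun M => ∀ j ∈ univ, ¬ R i j ⊆ M,
      card_filter_erasureWt_eq_choose hwn]
    simpa using card_filter_forall_not_subset_le (hR i) (hc i) hrw (by simp) univ
  calc (#{Z : Fin n → Bool | erasureWt Z = w ∧ ∃ i, ∀ j, ∃ u ∈ R i j, Z u = true} : ℝ)
      ≤ ∑ i, (#{Z : Fin n → Bool | erasureWt Z = w ∧ ∀ j, ∃ u ∈ R i j, Z u = true} : ℝ) := by
        norm_cast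
        refine (card_le_card fun Z hZ => ?_).trans card_biUnion_le
        simp only [mem_filter, mem_univ, true_and, mem_biUnion] at hZ ⊢
        obtain ⟨hw, i, hi⟩ := hZ
        exact ⟨i, hw, hi⟩
    _ ≤ _ := by
        grw [sum_le_sum fun i _ => hlost i]
        simp [mul_assoc]

end ErasurePatterns

theorem floor_one_sub_mul_le {q : ℝ} (hq : 0 ≤ q) (hq1 : q ≤ 1) (n : ℕ) :
    ⌊(1 - q) * n⌋₊ ≤ n ∧ q * n ≤ (n - ⌊(1 - q) * n⌋₊ : ℕ) := by
  have hfloor : (⌊(1 - q) * n⌋₊ : ℝ) ≤ (1 - q) * n := Nat.floor_le (by positivity)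
  have hle : ⌊(1 - q) * n⌋₊ ≤ n := Nat.floor_le_of_le (by nlinarith)
  refine ⟨hle, ?_⟩
  rw [Nat.cast_sub hle]
  linarith

theorem pow_mul_one_sub_le_pow_div {q : ℝ} {m n r : ℕ} (hq : 0 < q) (hr : 1 ≤ r)
    (hrq : r ≤ q * n) (hqm : q * n ≤ m) (hmn : m ≤ n) :
    q ^ r * (1 - r ^ 2 / (q * n)) ≤ (((m - r + 1 : ℕ) : ℝ) / (n - r + 1 : ℕ)) ^ r := by
  set x : ℝ := ((m - r + 1 : ℕ) : ℝ) / (n - r + 1 : ℕ)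
  have hr' : (1 : ℝ) ≤ r := by exact_mod_cast hr
  have hrm : r ≤ m := by exact_mod_cast hrq.trans hqm
  have hn : (0 : ℝ) < n := by nlinarith
  have hx : q - r / n ≤ x := by
    rw [show q - r / n = (q * n - r) / n by field_simp]
    refine div_le_div₀ (by positivity) ?_ (by positivity) ?_ <;>
      push_cast [Nat.cast_sub hrm, Nat.cast_sub (hrm.trans hmn)] <;> linarith
  have hxq : -(r ^ 2 / (q * n)) ≤ r * (x / q - 1) := by
    have : -(r / (q * n)) ≤ x / q - 1 := by
      rw [le_sub_iff_add_le, le_div_iff₀ hq]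
      calc (-(r / (q * n)) + 1) * q = q - r / n := by field_simp; ring
        _ ≤ x := hx
    calc -(r ^ 2 / (q * n)) = r * -(r / (q * n)) := by ring
      _ ≤ r * (x / q - 1) := by gcongr
  have hxq0 : 0 ≤ x / q := by positivity
  have hbernoulli := one_add_mul_sub_le_pow (a := x / q) (by linarith) r
  calc q ^ r * (1 - r ^ 2 / (q * n)) ≤ q ^ r * (x / q) ^ r := by gcongr; linarith
    _ = x ^ r := by rw [← mul_pow, mul_div_cancel₀ _ hq.ne']

theorem mul_one_sub_pow_le_rpow {n T : ℕ} {y a : ℝ} (hn : 0 < n) (hy : y ≤ 1)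
    (h : a * Real.log n ≤ T * y) : n * (1 - y) ^ T ≤ (n : ℝ) ^ (1 - a) := by
  have hn' : (0 : ℝ) < n := by exact_mod_cast hn
  calc n * (1 - y) ^ T ≤ n * Real.exp (-y) ^ T := by
        gcongr
        exact Real.one_sub_le_exp_neg y
    _ = n * Real.exp (-(T * y)) := by rw [← Real.exp_nat_mul]; ring_nf
    _ ≤ n * Real.exp (-(a * Real.log n)) := by gcongr
    _ = (n : ℝ) ^ (1 - a) := by
        rw [Real.rpow_def_of_pos hn', mul_sub, mul_one, Real.exp_sub, Real.exp_log hn',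
          Real.exp_neg, div_eq_mul_inv, mul_comm (Real.log n)]

theorem union_bound_le_rpow {n r T w : ℕ} {c : ℝ} (hr : 1 ≤ r) (hc : 3 / 2 ≤ c) (hTn : T ≤ n)
    (hQ0 : 0 < c * Real.logb 2 n / T) (hQ1 : c * Real.logb 2 n / T < 1)
    (hlog : 10 * r ^ 2 ≤ Real.logb 2 n)
    (hw : w = ⌊(1 - (c * Real.logb 2 n / T) ^ (1 / (r : ℝ))) * n⌋₊) :
    w ≤ n ∧ r ≤ n - w ∧
      n * (1 - (((n - w - r + 1 : ℕ) : ℝ) / (n - r + 1 : ℕ)) ^ r) ^ T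
        ≤ (n : ℝ) ^ (-(1 / 4 : ℝ)) := by
  set Q := c * Real.logb 2 n / T
  set q := Q ^ (1 / (r : ℝ))
  have hr' : (1 : ℝ) ≤ r := by exact_mod_cast hr
  have hlog0 : 0 < Real.logb 2 n := by nlinarith
  have hn : 0 < n := Nat.pos_of_ne_zero fun h => by simp [h] at hlog0
  have hT : (0 : ℝ) < T := Nat.cast_pos.2 (Nat.pos_of_ne_zero fun h => by simp [Q, h] at hQ0)
  have hq0 : 0 < q := Real.rpow_pos_of_pos hQ0 _
  have hq1 : q ≤ 1 := Real.rpow_le_one hQ0.le hQ1.le (by positivity)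
  have hQq : Q ≤ q := by
    have := Real.rpow_le_rpow_of_exponent_ge hQ0 hQ1.le
      (show 1 / (r : ℝ) ≤ 1 from div_le_one_of_le₀ hr' (by positivity))
    rwa [Real.rpow_one] at this
  have hqr : q ^ r = Q := by
    simp only [q, one_div]
    exact Real.rpow_inv_natCast_pow hQ0.le (by omega)
  have hQn : c * Real.logb 2 n ≤ Q * n := by
    rw [div_mul_eq_mul_div, le_div_iff₀ hT]
    gcongr
  have hqn : 10 * r ^ 2 ≤ q * n := by nlinarith
  obtain ⟨hwn, hqm⟩ := floor_one_sub_mul_le hq0.le hq1 n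
  rw [← hw] at hwn hqm
  have hrw : r ≤ n - w := by exact_mod_cast (show (r : ℝ) ≤ q * n by nlinarith).trans hqm
  refine ⟨hwn, hrw, mul_one_sub_pow_le_rpow (a := 5 / 4) hn ?_ ?_ |>.trans_eq (by norm_num)⟩
  · exact pow_le_one₀ (by positivity) (div_le_one_of_le₀ (by gcongr; omega) (by positivity))
  · have hx := pow_mul_one_sub_le_pow_div hq0 hr (by nlinarith) hqm (Nat.sub_le n w)
    have hsmall : (r : ℝ) ^ 2 / (q * n) ≤ 1 / 10 := by
      rw [div_le_iff₀ (by positivity)]; linarith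
    have hlog2 : Real.log n ≤ Real.logb 2 n :=
      le_div_self (Real.log_natCast_nonneg n) (Real.log_pos one_lt_two)
        (Real.log_two_lt_d9.le.trans (by norm_num))
    calc 5 / 4 * Real.log n ≤ 9 / 10 * (c * Real.logb 2 n) := by nlinarith
      _ = T * (q ^ r * (9 / 10)) := by
          rw [hqr, show Q = c * Real.logb 2 n / T from rfl]; field_simp
      _ ≤ T * (((n - w - r + 1 : ℕ) : ℝ) / (n - r + 1 : ℕ)) ^ r := by
          gcongr; nlinarith [pow_pos hq0 r]

theorem mld_corrects_virtually_all_erasures_bec_general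
    (r : ℕ) (hr : 1 ≤ r) (t : ℕ → ℕ)
    (c : ℝ) (hc : 3 / 2 ≤ c)
    (hlarge : ∀ᶠ n : ℕ in atTop,
      0 < c * Real.logb 2 n / t n ∧ c * Real.logb 2 n / t n < 1)
    (R : (n : ℕ) → Fin n → Fin (t n) → Finset (Fin n))
    (hdisj : ∀ n (i : Fin n) (j j' : Fin (t n)), j ≠ j' → Disjoint (R n i j) (R n i j'))
    (hcard : ∀ n (i : Fin n) (j : Fin (t n)), (R n i j).card = r)
    (w : ℕ → ℕ)
    (hw : ∀ n : ℕ, w n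
      = ⌊(1 - (c * Real.logb 2 n / t n) ^ (1 / (r : ℝ))) * n⌋₊) :
    Tendsto
      (fun n : ℕ =>
        ((univ.filter (fun Z : Fin n → Bool => erasureWt Z = w n ∧
            ∃ i : Fin n, ∀ j : Fin (t n), ∃ u ∈ R n i j, Z u = true)).card : ℝ)
        / ((univ.filter (fun Z : Fin n → Bool => erasureWt Z = w n)).card : ℝ))
      atTop (nhds 0) := by
  have hlog : ∀ᶠ n : ℕ in atTop, 10 * (r : ℝ) ^ 2 ≤ Real.logb 2 n :=
    ((Real.tendsto_logb_atTop one_lt_two).comp tendsto_natCast_atTop_atTop).eventually_ge_atTop _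
  refine squeeze_zero' (Eventually.of_forall fun n => by positivity) ?_
    ((tendsto_rpow_neg_atTop (by norm_num : (0 : ℝ) < 1 / 4)).comp tendsto_natCast_atTop_atTop)
  filter_upwards [hlarge, hlog] with n ⟨hQ0, hQ1⟩ hlogn
  have hn : 0 < n := Nat.pos_of_ne_zero fun h => by simp [h] at hQ0
  have hdisj' : ∀ i, Pairwise (Disjoint on R n i) := fun i j j' => hdisj n i j j'
  have hT : t n ≤ n := by
    simpa using (Nat.le_mul_of_pos_right _ hr).trans
      (card_mul_le_card_of_pairwise_disjoint (hdisj' ⟨0, hn⟩) (hcard n ⟨0, hn⟩))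
  obtain ⟨hwn, hrw, hdecay⟩ := union_bound_le_rpow hr hc hT hQ0 hQ1 hlogn (hw n)
  have hall : (0 : ℝ) < #{Z : Fin n → Bool | erasureWt Z = w n} := by
    rw [card_filter_erasureWt_eq_choose hwn]
    exact_mod_cast Nat.choose_pos (Nat.sub_le n _)
  rw [div_le_iff₀ hall]
  exact (card_uncorrectable_le hwn hrw (R n) hdisj' (hcard n)).trans (by gcongr; exact hdecay)

/-- **Virtually all erasure patterns of weight `n(1 − (c log₂ n / t(n))^{1/r})` are
corrected (Theorem 5 of the paper).**
Fix `r ≥ 1`, an unbounded nondecreasing availability `t : ℕ → ℕ`, and `c ≥ 3/2`.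
For each `n` let `p_n = 1 − (c log₂ n / t n)^{1/r}` (for `n` large enough that
`0 < c log₂ n / t n < 1`) and `w_n = ⌊p_n n⌋`, and suppose every index
`i ∈ {1,…,n}` has `t n` pairwise disjoint recovery sets of size `r` avoiding `i`.
An erasure pattern `Z ∈ {0,1}^n` of weight `w_n` is uncorrectable if some index `i`
has every one of its recovery sets containing a coordinate `u` with `Z u = 1`.
Then the fraction of uncorrectable weight-`w_n` patterns among all weight-`w_n`
patterns tends to `0` as `n → ∞`. -/
theorem mld_corrects_virtually_all_erasures_bec
    (r : ℕ) (hr : 1 ≤ r) (t : ℕ → ℕ) (hmono : Monotone t)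
    (hunbounded : Tendsto t atTop atTop)
    (c : ℝ) (hc : 3 / 2 ≤ c)
    (hlarge : ∀ᶠ n : ℕ in atTop,
      0 < c * Real.logb 2 n / t n ∧ c * Real.logb 2 n / t n < 1)
    (R : (n : ℕ) → Fin n → Fin (t n) → Finset (Fin n))
    (hdisj : ∀ n (i : Fin n) (j j' : Fin (t n)), j ≠ j' → Disjoint (R n i j) (R n i j'))
    (hnoti : ∀ n (i : Fin n) (j : Fin (t n)), i ∉ R n i j)
    (hcard : ∀ n (i : Fin n) (j : Fin (t n)), (R n i j).card = r)
    (w : ℕ → ℕ)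
    (hw : ∀ n : ℕ, w n
      = ⌊(1 - (c * Real.logb 2 n / t n) ^ (1 / (r : ℝ))) * n⌋₊) :
    Tendsto
      (fun n : ℕ =>
        ((univ.filter (fun Z : Fin n → Bool => erasureWt Z = w n ∧
            ∃ i : Fin n, ∀ j : Fin (t n), ∃ u ∈ R n i j, Z u = true)).card : ℝ)
        / ((univ.filter (fun Z : Fin n → Bool => erasureWt Z = w n)).card : ℝ))
      atTop (nhds 0) :=
  mld_corrects_virtually_all_erasures_bec_general r hr t c hc hlarge R hdisj hcard w hw
end
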